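/- Let f be convex on (R^n, ⟨·,·⟩), let D be θ-averaged for some θ ∈ (0,1/2], and define T = ½I + ½(2Prox_{ρ⁻¹f} − I)∘(2D − I) for ρ > 0. If T has a fixed point, then the PnP-ADMM iterates x_{k+1} = Prox_{ρ⁻¹f}(y_k − z_k), y_{k+1} = D(x_{k+1} + z_k), z_{k+1} = z_k + x_{k+1} − y_{k+1} converge: x_k → Prox_{ρ⁻¹f}∘(2D−I)(u*), y_k → D(u*), z_k → (I−D)(u*) for some fixed point u* of T. -/

import Mathlib

/-!
Write `R F := 2F - I`. With `u_k := x_{k+1} + z_k`, the ADMM recursion becomes the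
Krasnosel'skii–Mann iteration `u_{k+1} = ½ u_k + ½ R_P (R_D u_k)`, and `y_{k+1} = D u_k`,
`z_{k+1} = u_k - D u_k`, `x_{k+2} = P (R_D u_k)`. The proximal map `P` is firmly nonexpansive
(from its variational inequality), so `R_P` is nonexpansive; `R_D = (1 - 2θ) I + 2θ S` is
nonexpansive because `θ ≤ 1/2`. For a nonexpansive `N` with a fixed point, the averaged iterates
are Fejér monotone with square-summable residuals `u_k - N u_k`; in finite dimension a cluster
point exists, is a fixed point, and Fejér monotonicity upgrades subsequential convergence to
convergence. Continuity of `P` and `D` transfers the convergence to `x`, `y`, `z`.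
-/

open Filter Topology
open scoped RealInnerProductSpace

lemma nonpos_of_forall_le_mul {a b : ℝ} (h : ∀ t : ℝ, 0 < t → t ≤ 1 → a ≤ t * b) : a ≤ 0 := by
  have hlim : Tendsto (fun t : ℝ => t * b) (𝓝[>] 0) (𝓝 0) :=
    ((continuous_mul_const b).tendsto' 0 0 (zero_mul b)).mono_left nhdsWithin_le_nhds
  refine ge_of_tendsto hlim ?_
  filter_upwards [Ioc_mem_nhdsGT one_pos] with t ht using h t ht.1 ht.2

lemma summable_of_succ_add_le {a b : ℕ → ℝ} (ha : ∀ k, 0 ≤ a k) (hb : ∀ k, 0 ≤ b k)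
    (h : ∀ k, a (k + 1) + b k ≤ a k) : Summable b := by
  refine summable_of_sum_range_le hb (c := a 0) fun n => ?_
  calc ∑ k ∈ Finset.range n, b k ≤ ∑ k ∈ Finset.range n, (a k - a (k + 1)) :=
        Finset.sum_le_sum fun k _ => by linarith [h k]
    _ = a 0 - a n := Finset.sum_range_sub' a n
    _ ≤ a 0 := by linarith [ha n]

lemma tendsto_of_dist_succ_le_of_subseq {X : Type*} [MetricSpace X] {u : ℕ → X} {w : X}
    (h : ∀ k, dist (u (k + 1)) w ≤ dist (u k) w) {φ : ℕ → ℕ} (hφ : Tendsto φ atTop atTop)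
    (hsub : Tendsto (u ∘ φ) atTop (𝓝 w)) : Tendsto u atTop (𝓝 w) := by
  have hanti : Antitone fun k => dist (u k) w := antitone_nat_of_succ_le h
  have hinf := tendsto_atTop_ciInf hanti ⟨0, by rintro _ ⟨k, rfl⟩; exact dist_nonneg⟩
  have hzero : Tendsto (fun j => dist (u (φ j)) w) atTop (𝓝 0) :=
    tendsto_iff_dist_tendsto_zero.1 hsub
  rw [tendsto_nhds_unique (hinf.comp hφ) hzero] at hinf
  exact tendsto_iff_dist_tendsto_zero.2 hinf

def reflect {E : Type*} [AddCommGroup E] [Module ℝ E] (F : E → E) (v : E) : E :=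
  (2 : ℝ) • F v - v

section Nonexpansive

variable {H : Type*} [NormedAddCommGroup H] [InnerProductSpace ℝ H]

def FirmlyNonexpansive (P : H → H) : Prop :=
  ∀ a b, ‖P a - P b‖ ^ 2 ≤ ⟪P a - P b, a - b⟫

omit [InnerProductSpace ℝ H] in
lemma lipschitzWith_one_iff_norm_sub_le {F : H → H} :
    LipschitzWith 1 F ↔ ∀ a b, ‖F a - F b‖ ≤ ‖a - b‖ := by
  simp [lipschitzWith_iff_norm_sub_le]

/-- `hp` says that `p = Prox_{c f}(x)`. -/
lemma ConvexOn.inner_sub_prox_le {f : H → ℝ} (hf : ConvexOn ℝ Set.univ f) {c : ℝ} (hc : 0 ≤ c)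
    {x p : H} (hp : ∀ y, c * f p + ‖p - x‖ ^ 2 / 2 ≤ c * f y + ‖y - x‖ ^ 2 / 2) (y : H) :
    ⟪x - p, y - p⟫ ≤ c * f y - c * f p := by
  suffices ⟪x - p, y - p⟫ - (c * f y - c * f p) ≤ 0 by linarith
  refine nonpos_of_forall_le_mul (b := ‖y - p‖ ^ 2 / 2) fun t ht0 ht1 => ?_
  have hconv : f ((1 - t) • p + t • y) ≤ (1 - t) * f p + t * f y :=
    hf.2 (Set.mem_univ _) (Set.mem_univ _) (by linarith) ht0.le (by ring)
  have hnorm : ‖(1 - t) • p + t • y - x‖ ^ 2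
      = ‖p - x‖ ^ 2 - 2 * t * ⟪x - p, y - p⟫ + t ^ 2 * ‖y - p‖ ^ 2 := by
    rw [show (1 - t) • p + t • y - x = (p - x) + t • (y - p) by module, norm_add_sq_real,
      real_inner_smul_right, norm_smul, Real.norm_of_nonneg ht0.le, ← neg_sub x p, inner_neg_left]
    ring
  have hmin := hp ((1 - t) • p + t • y)
  rw [hnorm] at hmin
  have := mul_le_mul_of_nonneg_left hconv hc
  nlinarith

lemma firmlyNonexpansive_of_inner_sub_le {P : H → H} (g : H → ℝ)
    (hP : ∀ x y, ⟪x - P x, y - P x⟫ ≤ g y - g (P x)) : FirmlyNonexpansive P := by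
  intro a b
  have hab := hP a (P b)
  have hba := hP b (P a)
  have hsum : ⟪a - P a, P b - P a⟫ + ⟪b - P b, P a - P b⟫
      = ‖P a - P b‖ ^ 2 - ⟪P a - P b, a - b⟫ := by
    rw [← real_inner_self_eq_norm_sq, ← neg_sub (P a) (P b), inner_neg_right, neg_add_eq_sub,
      ← inner_sub_left, ← inner_sub_right, real_inner_comm]
    congr 1
    abel
  linarith

namespace FirmlyNonexpansive

variable {P : H → H}

lemma lipschitzWith (hP : FirmlyNonexpansive P) : LipschitzWith 1 P := by
  refine lipschitzWith_one_iff_norm_sub_le.2 fun a b => ?_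
  have h := (hP a b).trans (real_inner_le_norm _ _)
  rcases (norm_nonneg (P a - P b)).eq_or_lt with h0 | hpos
  · exact h0 ▸ norm_nonneg _
  · exact le_of_mul_le_mul_left (by rwa [sq] at h) hpos

lemma lipschitzWith_reflect (hP : FirmlyNonexpansive P) : LipschitzWith 1 (reflect P) := by
  refine lipschitzWith_one_iff_norm_sub_le.2 fun a b => ?_
  have hsq : ‖reflect P a - reflect P b‖ ^ 2 ≤ ‖a - b‖ ^ 2 := by
    rw [reflect, reflect, show (2 : ℝ) • P a - a - ((2 : ℝ) • P b - b)
      = (2 : ℝ) • (P a - P b) - (a - b) by module, norm_sub_sq_real, real_inner_smul_left,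
      norm_smul, Real.norm_ofNat]
    nlinarith [hP a b]
  exact sq_le_sq₀ (norm_nonneg _) (norm_nonneg _) |>.1 hsq

end FirmlyNonexpansive

lemma lipschitzWith_one_sub_smul_add_smul {S : H → H} (hS : LipschitzWith 1 S) {α : ℝ}
    (hα₀ : 0 ≤ α) (hα₁ : α ≤ 1) : LipschitzWith 1 fun v => (1 - α) • v + α • S v := by
  refine lipschitzWith_one_iff_norm_sub_le.2 fun a b => ?_
  calc ‖(1 - α) • a + α • S a - ((1 - α) • b + α • S b)‖
      = ‖(1 - α) • (a - b) + α • (S a - S b)‖ := by congr 1; module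
    _ ≤ (1 - α) * ‖a - b‖ + α * ‖S a - S b‖ := by
      refine (norm_add_le _ _).trans_eq ?_
      rw [norm_smul, norm_smul, Real.norm_of_nonneg (by linarith), Real.norm_of_nonneg hα₀]
    _ ≤ ‖a - b‖ := by
      nlinarith [lipschitzWith_one_iff_norm_sub_le.1 hS a b]

end Nonexpansive

section KrasnoselskiiMann

variable {H : Type*} [NormedAddCommGroup H] [InnerProductSpace ℝ H]

lemma norm_one_sub_smul_add_smul_sq (α : ℝ) (a b : H) :
    ‖(1 - α) • a + α • b‖ ^ 2
      = (1 - α) * ‖a‖ ^ 2 + α * ‖b‖ ^ 2 - α * (1 - α) * ‖a - b‖ ^ 2 := by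
  rw [norm_add_sq_real, norm_sub_sq_real, norm_smul, norm_smul, real_inner_smul_left,
    real_inner_smul_right, mul_pow, mul_pow, Real.norm_eq_abs, Real.norm_eq_abs, sq_abs, sq_abs]
  ring

lemma norm_one_sub_smul_add_smul_sub_sq_le {N : H → H} (hN : LipschitzWith 1 N) {α : ℝ}
    (hα₀ : 0 ≤ α) {v : H} (hv : N v = v) (u : H) :
    ‖(1 - α) • u + α • N u - v‖ ^ 2 + α * (1 - α) * ‖u - N u‖ ^ 2 ≤ ‖u - v‖ ^ 2 := by
  have hle : ‖N u - v‖ ≤ ‖u - v‖ := by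
    simpa only [hv] using lipschitzWith_one_iff_norm_sub_le.1 hN u v
  have key := norm_one_sub_smul_add_smul_sq α (u - v) (N u - v)
  rw [show (1 - α) • (u - v) + α • (N u - v) = (1 - α) • u + α • N u - v by module,
    show u - v - (N u - v) = u - N u by abel] at key
  rw [key]
  nlinarith [pow_le_pow_left₀ (norm_nonneg _) hle 2]

lemma one_sub_smul_add_smul_eq_self_iff {α : ℝ} (hα : α ≠ 0) {v w : H} :
    (1 - α) • v + α • w = v ↔ w = v := by
  rw [show (1 - α) • v + α • w = v + α • (w - v) by module, add_eq_left, smul_eq_zero,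
    sub_eq_zero, or_iff_right hα]

theorem exists_tendsto_krasnoselskiiMann [FiniteDimensional ℝ H] {N T : H → H}
    (hN : LipschitzWith 1 N) {α : ℝ} (hα₀ : 0 < α) (hα₁ : α < 1)
    (hT : ∀ v, T v = (1 - α) • v + α • N v) (hfix : ∃ v, T v = v) {u : ℕ → H}
    (hu : ∀ k, u (k + 1) = T (u k)) : ∃ w, T w = w ∧ Tendsto u atTop (𝓝 w) := by
  have hfixN : ∀ v, T v = v ↔ N v = v := fun v => by
    rw [hT, one_sub_smul_add_smul_eq_self_iff hα₀.ne']
  have hc : 0 < α * (1 - α) := mul_pos hα₀ (sub_pos.2 hα₁)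
  have fejer : ∀ w, T w = w → ∀ k,
      ‖u (k + 1) - w‖ ^ 2 + α * (1 - α) * ‖u k - N (u k)‖ ^ 2 ≤ ‖u k - w‖ ^ 2 :=
    fun w hw k => by
      rw [hu, hT]
      exact norm_one_sub_smul_add_smul_sub_sq_le hN hα₀.le ((hfixN w).1 hw) (u k)
  have dist_succ_le : ∀ w, T w = w → ∀ k, dist (u (k + 1)) w ≤ dist (u k) w := fun w hw k => by
    rw [dist_eq_norm, dist_eq_norm, ← sq_le_sq₀ (norm_nonneg _) (norm_nonneg _)]
    nlinarith [fejer w hw k, sq_nonneg ‖u k - N (u k)‖]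
  obtain ⟨v, hv⟩ := hfix
  have hres : Tendsto (fun k => u k - N (u k)) atTop (𝓝 0) := by
    have hsum : Summable fun k => α * (1 - α) * ‖u k - N (u k)‖ ^ 2 :=
      summable_of_succ_add_le (a := fun k => ‖u k - v‖ ^ 2) (fun _ => sq_nonneg _)
        (fun _ => mul_nonneg hc.le (sq_nonneg _)) (fejer v hv)
    have hsq := ((summable_mul_left_iff hc.ne').1 hsum).tendsto_atTop_zero.sqrt
    rw [tendsto_zero_iff_norm_tendsto_zero]
    simpa [Real.sqrt_sq (norm_nonneg _)] using hsq
  obtain ⟨w, -, φ, hφ, hφw⟩ := (isCompact_closedBall v (dist (u 0) v)).tendsto_subseq fun k =>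
    Metric.mem_closedBall.2 <| antitone_nat_of_succ_le (f := fun k => dist (u k) v)
      (dist_succ_le v hv) (Nat.zero_le k)
  have hw : T w = w := by
    refine (hfixN w).2 (tendsto_nhds_unique ((hN.continuous.tendsto w).comp hφw) ?_)
    simpa [Function.comp_def] using hφw.sub (hres.comp hφ.tendsto_atTop)
  exact ⟨w, hw, tendsto_of_dist_succ_le_of_subseq (dist_succ_le w hw) hφ.tendsto_atTop hφw⟩

end KrasnoselskiiMann

section ADMM

variable {E : Type*} [AddCommGroup E] [Module ℝ E] {P D : E → E} {x y z : ℕ → E}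

omit [Module ℝ E] in
lemma admm_z_succ (hy : ∀ k, y (k + 1) = D (x (k + 1) + z k))
    (hz : ∀ k, z (k + 1) = z k + x (k + 1) - y (k + 1)) (k : ℕ) :
    z (k + 1) = x (k + 1) + z k - D (x (k + 1) + z k) := by
  rw [hz, hy]
  abel

lemma admm_x_succ_succ (hx : ∀ k, x (k + 1) = P (y k - z k))
    (hy : ∀ k, y (k + 1) = D (x (k + 1) + z k))
    (hz : ∀ k, z (k + 1) = z k + x (k + 1) - y (k + 1)) (k : ℕ) :
    x (k + 2) = P (reflect D (x (k + 1) + z k)) := by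
  rw [hx, hy, admm_z_succ hy hz, reflect]
  congr 1
  module

lemma admm_iterate (hx : ∀ k, x (k + 1) = P (y k - z k))
    (hy : ∀ k, y (k + 1) = D (x (k + 1) + z k))
    (hz : ∀ k, z (k + 1) = z k + x (k + 1) - y (k + 1)) (k : ℕ) :
    x (k + 2) + z (k + 1) = (1 / 2 : ℝ) • (x (k + 1) + z k)
      + (1 / 2 : ℝ) • reflect P (reflect D (x (k + 1) + z k)) := by
  rw [admm_x_succ_succ hx hy hz, admm_z_succ hy hz]
  simp only [reflect]
  module

end ADMM

/-- Fixed-point convergence of PnP-ADMM: for convex f, a θ-averaged denoiser D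
(θ ∈ (0,1/2]) and ρ > 0, if T = ½I + ½(2Prox_{ρ⁻¹f} − I)∘(2D − I) has a fixed
point, then the PnP-ADMM iterates converge:
x_k → Prox_{ρ⁻¹f}((2D−I)u*), y_k → D(u*), z_k → (I−D)(u*) for some fixed
point u* of T. -/
theorem stmt11 {H : Type*} [NormedAddCommGroup H] [InnerProductSpace ℝ H]
    [FiniteDimensional ℝ H]
    (f : H → ℝ) (hconv : ConvexOn ℝ Set.univ f) (ρ : ℝ) (hρ : 0 < ρ)
    (P : H → H)
    (hP : ∀ x y : H, ρ⁻¹ * f (P x) + ‖P x - x‖ ^ 2 / 2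
        ≤ ρ⁻¹ * f y + ‖y - x‖ ^ 2 / 2)
    (D : H → H) (θ : ℝ) (hθ₁ : 0 < θ) (hθ₂ : θ ≤ 1/2)
    (S : H → H) (hS : ∀ x y, ‖S x - S y‖ ≤ ‖x - y‖)
    (hD : ∀ x, D x = (1 - θ) • x + θ • S x)
    (T : H → H)
    (hT : ∀ v, T v = (1/2 : ℝ) • v
        + (1/2 : ℝ) • ((2 : ℝ) • P ((2 : ℝ) • D v - v) - ((2 : ℝ) • D v - v)))
    (hfix : ∃ v, T v = v)
    (x y z : ℕ → H)
    (hx : ∀ k, x (k+1) = P (y k - z k))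
    (hy : ∀ k, y (k+1) = D (x (k+1) + z k))
    (hz : ∀ k, z (k+1) = z k + x (k+1) - y (k+1)) :
    ∃ ustar : H, T ustar = ustar ∧
      Filter.Tendsto x Filter.atTop (nhds (P ((2 : ℝ) • D ustar - ustar))) ∧
      Filter.Tendsto y Filter.atTop (nhds (D ustar)) ∧
      Filter.Tendsto z Filter.atTop (nhds (ustar - D ustar)) := by
  have hPfirm : FirmlyNonexpansive P := firmlyNonexpansive_of_inner_sub_le (fun y => ρ⁻¹ * f y)
    fun x y => hconv.inner_sub_prox_le (inv_nonneg.2 hρ.le) (hP x) y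
  have hSlip : LipschitzWith 1 S := lipschitzWith_one_iff_norm_sub_le.2 hS
  have hDlip : LipschitzWith 1 D := by
    rw [funext hD]
    exact lipschitzWith_one_sub_smul_add_smul hSlip hθ₁.le (by linarith)
  have hRD : LipschitzWith 1 (reflect D) := by
    rw [show reflect D = fun v => (1 - 2 * θ) • v + (2 * θ) • S v by
      funext v; rw [reflect, hD]; module]
    exact lipschitzWith_one_sub_smul_add_smul hSlip (by linarith) (by linarith)
  have hN : LipschitzWith 1 (reflect P ∘ reflect D) := by
    simpa only [mul_one] using hPfirm.lipschitzWith_reflect.comp hRD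
  obtain ⟨w, hw, hu⟩ := exists_tendsto_krasnoselskiiMann hN
    (α := 1 / 2) (by norm_num) (by norm_num) (fun v => by rw [hT]; norm_num [reflect]) hfix
    (u := fun k => x (k + 1) + z k) fun k => (admm_iterate hx hy hz k).trans (hT _).symm
  refine ⟨w, hw, ?_, ?_, ?_⟩
  · refine (tendsto_add_atTop_iff_nat 2).1 ?_
    simp_rw [admm_x_succ_succ hx hy hz]
    exact (hPfirm.lipschitzWith.continuous.tendsto _).comp ((hRD.continuous.tendsto w).comp hu)
  · refine (tendsto_add_atTop_iff_nat 1).1 ?_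
    simp_rw [hy]
    exact (hDlip.continuous.tendsto w).comp hu
  · refine (tendsto_add_atTop_iff_nat 1).1 ?_
    simp_rw [admm_z_succ hy hz]
    exact hu.sub ((hDlip.continuous.tendsto w).comp hu)
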